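/- arXiv:2311.11943 — 7 statements merged into one kernel-verified Lean document; each statement's English description precedes it below -/
import Mathlib

section
/- Let V be a c × (n−c) real matrix and set G₁ = −(1/2)·V·Vᵀ. Define the n × n block matrix G₀ = [[I_c + G₁, V], [Vᵀ, −I_{n−c}]]. Then G₀ᵀG₀ = I_n + GᵀG, where G = [G₁ V] is the c × n matrix formed by horizontally concatenating G₁ and V. -/
open Matrix

/-- For `V : c × (n-c)` real, `G₁ = -(1/2) V Vᵀ`,
`G₀ = [[I + G₁, V], [Vᵀ, -I]]` and `G = [G₁ V]`, we have `G₀ᵀ G₀ = I + Gᵀ G`. -/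
theorem stmt0 (c n : ℕ) (hc : 0 < c) (hcn : c < n)
    (V : Matrix (Fin c) (Fin (n - c)) ℝ)
    (G₁ : Matrix (Fin c) (Fin c) ℝ) (hG₁ : G₁ = (-(1/2 : ℝ)) • (V * Vᵀ))
    (G : Matrix (Fin c) (Fin c ⊕ Fin (n - c)) ℝ) (hG : G = fromCols G₁ V)
    (G₀ : Matrix (Fin c ⊕ Fin (n - c)) (Fin c ⊕ Fin (n - c)) ℝ)
    (hG₀ : G₀ = fromBlocks (1 + G₁) V Vᵀ (-1)) :
    G₀ᵀ * G₀ = 1 + Gᵀ * G := by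
  have hsym : G₁ᵀ = G₁ := by
    rw [hG₁]; simp [transpose_smul, Matrix.transpose_mul]
  have h2 : V * Vᵀ = (-2 : ℝ) • G₁ := by
    rw [hG₁]; ext i j; simp
  subst hG hG₀
  rw [transpose_fromCols, fromBlocks_transpose, fromBlocks_multiply,
    fromRows_mul, mul_fromCols, mul_fromCols]
  have h1 : (1 : Matrix (Fin c ⊕ Fin (n - c)) (Fin c ⊕ Fin (n - c)) ℝ)
      = fromBlocks 1 0 0 1 := by simp [fromBlocks_one]
  rw [h1, fromRows_fromCols_eq_fromBlocks, fromBlocks_add, fromBlocks_inj]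
  refine ⟨?_, ?_, ?_, ?_⟩
  · rw [transpose_add, transpose_one, hsym, transpose_transpose]
    have h3 : (1 + G₁) * (1 + G₁) + V * Vᵀ = 1 + G₁ * G₁ := by
      rw [h2]; ext i j; simp [Matrix.add_mul, Matrix.mul_add]; ring
    rw [h3]
  · rw [transpose_add, transpose_one, hsym, Matrix.add_mul, Matrix.one_mul,
      transpose_transpose, Matrix.mul_neg, Matrix.mul_one]
    abel
  · rw [Matrix.mul_add, Matrix.mul_one, transpose_neg, transpose_one,
      Matrix.neg_mul, Matrix.one_mul]
    abel
  · simp [add_comm]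
end

section
/- Let V be a c × (n−c) real matrix, G₁ = −(1/2)·V·Vᵀ, G = [G₁ V] the c × n concatenated matrix, and G₀ = [[I_c + G₁, V], [Vᵀ, −I_{n−c}]]. If Q₁ is an n × m real matrix such that the (n+c) × m stacked matrix [Q₁; G·Q₁] has orthonormal columns (i.e., Q₁ᵀQ₁ + Q₁ᵀGᵀG Q₁ = I_m), then G₀·Q₁ has orthonormal columns: (G₀Q₁)ᵀ(G₀Q₁) = I_m. -/
open Matrix

/-- if the stacked matrix `[Q₁; G Q₁]` has orthonormal columns,
then `G₀ Q₁` has orthonormal columns. -/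
theorem stmt1 (c n m : ℕ) (hc : 0 < c) (hcn : c < n)
    (V : Matrix (Fin c) (Fin (n - c)) ℝ)
    (G₁ : Matrix (Fin c) (Fin c) ℝ) (hG₁ : G₁ = (-(1/2 : ℝ)) • (V * Vᵀ))
    (G : Matrix (Fin c) (Fin c ⊕ Fin (n - c)) ℝ) (hG : G = fromCols G₁ V)
    (G₀ : Matrix (Fin c ⊕ Fin (n - c)) (Fin c ⊕ Fin (n - c)) ℝ)
    (hG₀ : G₀ = fromBlocks (1 + G₁) V Vᵀ (-1))
    (Q₁ : Matrix (Fin c ⊕ Fin (n - c)) (Fin m) ℝ)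
    (hQ : Q₁ᵀ * Q₁ + Q₁ᵀ * Gᵀ * G * Q₁ = 1) :
    (G₀ * Q₁)ᵀ * (G₀ * Q₁) = 1 := by
  have hG₁symm : G₁ᵀ = G₁ := by
    rw [hG₁]; simp [transpose_smul, transpose_mul]
  have key : G₀ᵀ * G₀ = 1 + Gᵀ * G := by
    have h2 : G₁ + G₁ + V * Vᵀ = 0 := by rw [hG₁]; module
    rw [hG₀, hG, transpose_fromCols, fromRows_mul_fromCols,
      fromBlocks_transpose, fromBlocks_multiply]
    rw [show (1 : Matrix (Fin c ⊕ Fin (n - c)) (Fin c ⊕ Fin (n - c)) ℝ) =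
      fromBlocks 1 0 0 1 from (fromBlocks_one).symm, fromBlocks_add]
    simp only [transpose_add, transpose_one, hG₁symm, transpose_transpose,
      transpose_neg]
    rw [show (1 + G₁) * (1 + G₁) + V * Vᵀ = 1 + G₁ * G₁ + (G₁ + G₁ + V * Vᵀ) by
        noncomm_ring, h2, add_zero,
      show (1 + G₁) * V + V * (-1 : Matrix (Fin (n-c)) (Fin (n-c)) ℝ) = 0 + G₁ * V by
        simp [Matrix.add_mul],
      show Vᵀ * (1 + G₁) + (-1 : Matrix (Fin (n-c)) (Fin (n-c)) ℝ) * Vᵀ = 0 + Vᵀ * G₁ by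
        simp [Matrix.mul_add],
      show Vᵀ * V + (-1 : Matrix (Fin (n-c)) (Fin (n-c)) ℝ) * (-1) = 1 + Vᵀ * V by
        simp; abel]
  calc (G₀ * Q₁)ᵀ * (G₀ * Q₁) = Q₁ᵀ * (G₀ᵀ * G₀) * Q₁ := by
        rw [transpose_mul]; simp [Matrix.mul_assoc]
    _ = Q₁ᵀ * Q₁ + Q₁ᵀ * Gᵀ * G * Q₁ := by
        rw [key, Matrix.mul_add, Matrix.mul_one, Matrix.add_mul]
        simp [Matrix.mul_assoc]
    _ = 1 := hQ
end

section
/- Let V be a c × (n−c) real matrix, G₁ = −(1/2)·V·Vᵀ, and G₀ = [[I_c + G₁, V], [Vᵀ, −I_{n−c}]]. Then G₀ is invertible. -/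
/-!
Take the Schur complement with respect to the invertible block `-1`: `G₀` is invertible iff
`1 + G₁ + V Vᵀ = 1 + ½ V Vᵀ` is, and this matrix is positive definite.
-/

open Matrix

variable {m n R : Type*} [Fintype m] [Fintype n] [DecidableEq m]

theorem Matrix.isUnit_fromBlocks_neg_one_iff [DecidableEq n] [CommRing R] {A : Matrix m m R}
    {B : Matrix m n R} {C : Matrix n m R} : IsUnit (fromBlocks A B C (-1)) ↔ IsUnit (A + B * C) := by
  let _ : Invertible (1 : Matrix n n R) := invertibleOne
  let _ : Invertible (-1 : Matrix n n R) := invertibleNeg 1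
  rw [isUnit_fromBlocks_iff_of_invertible₂₂, invOf_neg, invOf_one, Matrix.mul_neg,
    Matrix.mul_one, Matrix.neg_mul, sub_neg_eq_add]

theorem Matrix.posDef_one_add_smul_mul_conjTranspose [CommRing R] [PartialOrder R] [StarRing R]
    [StarOrderedRing R] [NoZeroDivisors R] [Nontrivial R] {t : R} (ht : 0 ≤ t) (A : Matrix m n R) :
    (1 + t • (A * Aᴴ)).PosDef :=
  PosDef.one.add_posSemidef ((posSemidef_self_mul_conjTranspose A).smul ht)

theorem stmt2_general (c n : ℕ)
    (V : Matrix (Fin c) (Fin (n - c)) ℝ)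
    (G₁ : Matrix (Fin c) (Fin c) ℝ) (hG₁ : G₁ = (-(1/2 : ℝ)) • (V * Vᵀ))
    (G₀ : Matrix (Fin c ⊕ Fin (n - c)) (Fin c ⊕ Fin (n - c)) ℝ)
    (hG₀ : G₀ = fromBlocks (1 + G₁) V Vᵀ (-1)) :
    IsUnit G₀ := by
  subst hG₀ hG₁
  have hschur : 1 + (-(1/2 : ℝ)) • (V * Vᵀ) + V * Vᵀ = 1 + (1/2 : ℝ) • (V * Vᴴ) := by
    rw [conjTranspose_eq_transpose_of_trivial]
    module
  rw [isUnit_fromBlocks_neg_one_iff, hschur]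
  exact (posDef_one_add_smul_mul_conjTranspose (by norm_num) V).isUnit

/-- `G₀ = [[I + G₁, V], [Vᵀ, -I]]` with `G₁ = -(1/2) V Vᵀ` is invertible. -/
theorem stmt2 (c n : ℕ) (hc : 0 < c) (hcn : c < n)
    (V : Matrix (Fin c) (Fin (n - c)) ℝ)
    (G₁ : Matrix (Fin c) (Fin c) ℝ) (hG₁ : G₁ = (-(1/2 : ℝ)) • (V * Vᵀ))
    (G₀ : Matrix (Fin c ⊕ Fin (n - c)) (Fin c ⊕ Fin (n - c)) ℝ)
    (hG₀ : G₀ = fromBlocks (1 + G₁) V Vᵀ (-1)) :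
    IsUnit G₀ :=
  stmt2_general c n V G₁ hG₁ G₀ hG₀
end

section
/- Let P, L, f be positive integers with 0 < f < P and P | L. Then any integer K satisfying: for all nonnegative integers a, b with a + b = P − f, a ≤ ā(K), b ≤ b̄(K) (where ā(K) and b̄(K) count nodes with ⌈K/P⌉ and ⌊K/P⌋ blocks respectively under load balancing), a·⌈K/P⌉ + b·⌊K/P⌋ ≥ f·L/P, must satisfy ⌈K/P⌉ ≥ ⌈f·L/((P−f)·P)⌉. -/
/-- any checksum count `K` satisfying the recovery inequalities must
satisfy `⌈K/P⌉ ≥ ⌈fL/((P-f)P)⌉`.  Here `⌈K/P⌉ = (K + P - 1)/P`, `⌊K/P⌋ = K/P`,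
`ā = K % P`, `b̄ = P - K % P` (natural-number division). -/
theorem stmt9 (P L f K : ℕ) (hP : 0 < P) (hL : 0 < L) (hf : 0 < f) (hfP : f < P)
    (hPL : P ∣ L)
    (H : ∀ a b : ℕ, a + b = P - f → a ≤ K % P → b ≤ P - K % P →
      f * (L / P) ≤ a * ((K + P - 1) / P) + b * (K / P)) :
    (f * L + (P - f) * P - 1) / ((P - f) * P) ≤ (K + P - 1) / P := by
  set c := (K + P - 1) / P with hc
  have hfloor : K / P ≤ c := Nat.div_le_div_right (by omega)
  obtain ⟨a, b, hab, ha, hb⟩ : ∃ a b : ℕ, a + b = P - f ∧ a ≤ K % P ∧ b ≤ P - K % P := by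
    have := Nat.mod_lt K hP
    exact ⟨min (P - f) (K % P), P - f - min (P - f) (K % P), by omega, by omega, by omega⟩
  have h1 := H a b hab ha hb
  have h2 : a * c + b * (K / P) ≤ (P - f) * c := by
    calc a * c + b * (K / P) ≤ a * c + b * c :=
          Nat.add_le_add_left (Nat.mul_le_mul_left b hfloor) _
      _ = (P - f) * c := by rw [← Nat.add_mul, hab]
  have h3 : f * L ≤ (P - f) * P * c := by
    obtain ⟨m, rfl⟩ := hPL
    rw [Nat.mul_div_cancel_left m hP] at h1
    calc f * (P * m) = f * m * P := by ring
      _ ≤ (P - f) * c * P := Nat.mul_le_mul_right P (le_trans h1 h2)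
      _ = (P - f) * P * c := by ring
  have hd : 0 < (P - f) * P := Nat.mul_pos (by omega) hP
  rw [Nat.div_le_iff_le_mul_add_pred hd]
  omega
end

section
/- Let P, L, f be positive integers with 0 < f < P and P | L, and suppose additionally that P divides f·L. Define K = f·⌈f·L/((P−f)·P)⌉ + f·L/P. Then (i) K − f·⌈K/P⌉ ≥ f·L/P where we may use ⌈K/P⌉ = ⌈f·L/((P−f)·P)⌉, and (ii) the quantity m = P·⌈f·L/((P−f)·P)⌉ − K satisfies 0 ≤ m < P − f. -/
/-- `K = f·⌈fL/((P-f)P)⌉ + fL/P` achieves the lower bound: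
`⌈K/P⌉ = ⌈fL/((P-f)P)⌉` and `K - f·⌈K/P⌉ ≥ fL/P`, and
`m = P·⌈fL/((P-f)P)⌉ - K` satisfies `0 ≤ m < P - f`. -/
theorem stmt10 (P L f : ℕ) (hP : 0 < P) (hL : 0 < L) (hf : 0 < f) (hfP : f < P)
    (hPL : P ∣ L) (hPfL : P ∣ f * L)
    (ce K : ℕ)
    (hce : ce = (f * L + (P - f) * P - 1) / ((P - f) * P))
    (hK : K = f * ce + f * L / P) :
    (K + P - 1) / P = ce ∧
    f * (L / P) ≤ K - f * ((K + P - 1) / P) ∧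
    K ≤ P * ce ∧ P * ce - K < P - f := by
  obtain ⟨d, hd⟩ : ∃ d, P = f + d := ⟨P - f, by omega⟩
  have hd0 : 0 < d := by omega
  subst hd
  set b := ((f + d) - f) * (f + d) with hb
  have hbv : b = d * (f + d) := by
    rw [hb]; congr 1; omega
  have hbpos : 0 < b := by rw [hbv]; positivity
  set q := f * L / (f + d) with hq
  have hqmul : (f + d) * q = f * L := by
    rw [hq]; exact Nat.mul_div_cancel' hPfL
  have hqf : q = f * (L / (f + d)) := by
    rw [hq, Nat.mul_div_assoc f hPL]
  -- ceiling-division facts for ce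
  have hmod := Nat.div_add_mod (f * L + b - 1) b
  have hlt := Nat.mod_lt (f * L + b - 1) hbpos
  have hfL : 0 < f * L := by positivity
  have h1 : f * L ≤ b * ce := by rw [hce]; omega
  have h2 : b * ce < f * L + b := by rw [hce]; omega
  -- divide by (f+d)
  have h1' : q ≤ d * ce := by
    have : (f + d) * q ≤ (f + d) * (d * ce) := by
      rw [hqmul]
      calc f * L ≤ b * ce := h1
        _ = (f + d) * (d * ce) := by rw [hbv]; ring
    exact Nat.le_of_mul_le_mul_left this (by omega)
  have h2' : d * ce < q + d := by
    have : (f + d) * (d * ce) < (f + d) * (q + d) := by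
      calc (f + d) * (d * ce) = b * ce := by rw [hbv]; ring
        _ < f * L + b := h2
        _ = (f + d) * q + (f + d) * d := by rw [hqmul, hbv]; ring
        _ = (f + d) * (q + d) := by ring
    exact Nat.lt_of_mul_lt_mul_left this
  have hK' : K = f * ce + q := hK
  have hPce : (f + d) * ce = f * ce + d * ce := by ring
  -- first goal: ceiling of K/P is ce
  have hceil : (K + (f + d) - 1) / (f + d) = ce := by
    apply Nat.div_eq_of_lt_le
    · calc ce * (f + d) = f * ce + d * ce := by ring
        _ ≤ K + (f + d) - 1 := by omega
    · calc K + (f + d) - 1 < f * ce + d * ce + (f + d) := by omega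
        _ = (ce + 1) * (f + d) := by ring
  refine ⟨hceil, ?_, by omega, by omega⟩
  rw [hceil]
  omega
end

section
/- For positive integers f and P with 2f ≤ P, let Ṽ be an f × (P−f) matrix of real indeterminates v_{i,j}, and let G̃ = [G̃₁ Ṽ] where G̃₁ = −(1/2)·Ṽ·Ṽᵀ. Then for every square submatrix S of G̃ of size n_s ≤ f, the determinant det(S) is a nonzero polynomial in the entries v_{i,j}. -/
open Matrix MvPolynomial

lemma stmt11_aux (f n : ℕ) (hfn : f ≤ n) (ns : ℕ) (hns : ns ≤ f)
    (r : Fin ns → Fin f) (cc : Fin ns → Fin f ⊕ Fin n)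
    (hr : Function.Injective r) (hcc : Function.Injective cc) :
    ∃ v₀ : Fin f × Fin n → ℝ,
      (Matrix.of fun x y : Fin ns =>
        Sum.elim (fun c => -(1/2) * ∑ j, v₀ (r x, j) * v₀ (c, j))
          (fun j => v₀ (r x, j)) (cc y)).det ≠ 0 := by
  classical
  set pA : Fin ns → Prop := fun i => (cc i).isLeft = true with hpA
  -- the left/right column data
  have hAex : ∀ i : {i // pA i}, ∃ c, cc i.1 = Sum.inl c := fun i => Sum.isLeft_iff.1 i.2
  have hBex : ∀ i : {i // ¬ pA i}, ∃ j, cc i.1 = Sum.inr j := fun i =>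
    Sum.isRight_iff.1 (Sum.not_isLeft.1 i.2)
  set ci : {i // pA i} → Fin f := fun i => (hAex i).choose with hci_def
  have hci : ∀ i, cc i.1 = Sum.inl (ci i) := fun i => (hAex i).choose_spec
  set jj : {i // ¬ pA i} → Fin n := fun i => (hBex i).choose with hjj_def
  have hjj : ∀ i, cc i.1 = Sum.inr (jj i) := fun i => (hBex i).choose_spec
  have hci_inj : Function.Injective ci := by
    intro a b h
    have : cc a.1 = cc b.1 := by rw [hci a, hci b, h]
    exact Subtype.ext (hcc this)
  have hjj_inj : Function.Injective jj := by
    intro a b h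
    have : cc a.1 = cc b.1 := by rw [hjj a, hjj b, h]
    exact Subtype.ext (hcc this)
  -- cardinalities
  have hcards : Fintype.card {i // pA i} + Fintype.card {i // ¬ pA i} = ns := by
    have := Fintype.card_congr (Equiv.sumCompl pA)
    simpa [Fintype.card_sum] using this
  -- embedding of A into columns avoiding range of jj
  have hcompl : Fintype.card {col : Fin n // ¬ col ∈ Set.range jj} =
      n - Fintype.card {i // ¬ pA i} := by
    rw [Fintype.card_subtype_compl]
    congr 1
    · simp
    · exact Set.card_range_of_injective hjj_inj
  have hle : Fintype.card {i // pA i} ≤ Fintype.card {col : Fin n // ¬ col ∈ Set.range jj} := by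
    rw [hcompl]; omega
  obtain ⟨emb⟩ := Function.Embedding.nonempty_of_card_le hle
  set g : {i // pA i} → Fin n := fun i => (emb i).1 with hg_def
  have hg_inj : Function.Injective g := fun a b h => emb.injective (Subtype.ext h)
  have hg_not : ∀ i k, jj k ≠ g i := by
    intro i k h
    exact (emb i).2 ⟨k, h⟩
  set ℓ := Fintype.equivFin {i // pA i} with hℓ_def
  set t : Fin f → ℝ := fun u => (u : ℕ) with ht_def
  have ht_inj : Function.Injective t := by
    intro a b h
    exact Fin.ext (Nat.cast_injective h)
  -- the witness assignment
  set v₀ : Fin f × Fin n → ℝ := fun q =>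
    if h1 : ∃ i : {i // ¬ pA i}, jj i = q.2 then (if q.1 = r h1.choose.1 then 1 else 0)
    else if h2 : ∃ i : {i // pA i}, g i = q.2 then (t q.1) ^ (ℓ h2.choose : ℕ) else 0
    with hv₀_def
  have v₀jj : ∀ u i, v₀ (u, jj i) = if u = r i.1 then (1:ℝ) else 0 := by
    intro u i
    have h1 : ∃ k : {i // ¬ pA i}, jj k = jj i := ⟨i, rfl⟩
    have hch : h1.choose = i := hjj_inj h1.choose_spec
    simp only [hv₀_def, dif_pos h1, hch]
  have v₀g : ∀ u i, v₀ (u, g i) = (t u) ^ (ℓ i : ℕ) := by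
    intro u i
    have h1 : ¬ ∃ k : {i // ¬ pA i}, jj k = g i := by
      rintro ⟨k, hk⟩; exact hg_not i k hk
    have h2 : ∃ k : {i // pA i}, g k = g i := ⟨i, rfl⟩
    have hch : h2.choose = i := hg_inj h2.choose_spec
    simp only [hv₀_def, dif_neg h1, dif_pos h2, hch]
  have v₀zero : ∀ u col, (∀ i, jj i ≠ col) → (∀ i, g i ≠ col) → v₀ (u, col) = 0 := by
    intro u col h1 h2
    have hh1 : ¬ ∃ i, jj i = col := by rintro ⟨i, hi⟩; exact h1 i hi
    have hh2 : ¬ ∃ i, g i = col := by rintro ⟨i, hi⟩; exact h2 i hi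
    simp only [hv₀_def, dif_neg hh1, dif_neg hh2]
  -- key splitting of the inner-product sums
  have hsum : ∀ u c : Fin f, (∑ j, v₀ (u, j) * v₀ (c, j)) =
      (∑ i : {i // ¬ pA i}, (if u = r i.1 then (1:ℝ) else 0) * (if c = r i.1 then 1 else 0))
      + ∑ k : {i // pA i}, (t u) ^ (ℓ k : ℕ) * (t c) ^ (ℓ k : ℕ) := by
    intro u c
    have hinj : ∀ x ∈ (Finset.univ : Finset ({i // ¬ pA i} ⊕ {i // pA i})), ∀ y ∈ Finset.univ,
        Sum.elim jj g x = Sum.elim jj g y → x = y := by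
      rintro (x | x) - (y | y) - h <;> simp only [Sum.elim_inl, Sum.elim_inr] at h
      · exact congrArg Sum.inl (hjj_inj h)
      · exact absurd h (hg_not y x)
      · exact absurd h.symm (hg_not x y)
      · exact congrArg Sum.inr (hg_inj h)
    calc (∑ j, v₀ (u, j) * v₀ (c, j))
        = ∑ j ∈ Finset.image (Sum.elim jj g) Finset.univ, v₀ (u, j) * v₀ (c, j) := by
          refine (Finset.sum_subset (Finset.subset_univ _) ?_).symm
          intro x _ hx
          have h1 : ∀ i, jj i ≠ x := by
            intro i hi; exact hx (Finset.mem_image.2 ⟨Sum.inl i, Finset.mem_univ _, hi⟩)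
          have h2 : ∀ i, g i ≠ x := by
            intro i hi; exact hx (Finset.mem_image.2 ⟨Sum.inr i, Finset.mem_univ _, hi⟩)
          rw [v₀zero u x h1 h2, zero_mul]
      _ = ∑ x : {i // ¬ pA i} ⊕ {i // pA i}, v₀ (u, Sum.elim jj g x) * v₀ (c, Sum.elim jj g x) :=
          Finset.sum_image hinj
      _ = _ := by
          rw [Fintype.sum_sum_type]
          simp only [Sum.elim_inl, Sum.elim_inr, v₀jj, v₀g]
  refine ⟨v₀, ?_⟩
  set M : Matrix (Fin ns) (Fin ns) ℝ := Matrix.of fun x y =>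
    Sum.elim (fun c => -(1/2) * ∑ j, v₀ (r x, j) * v₀ (c, j))
      (fun j => v₀ (r x, j)) (cc y) with hM_def
  set SAA : Matrix {i // pA i} {i // pA i} ℝ := Matrix.of fun a i =>
    -(1/2) * ∑ k : {i // pA i}, (t (r a.1)) ^ (ℓ k : ℕ) * (t (ci i)) ^ (ℓ k : ℕ) with hSAA_def
  set SBA : Matrix {i // ¬ pA i} {i // pA i} ℝ := Matrix.of fun b i => M b.1 i.1 with hSBA_def
  have hsub : M.submatrix (Equiv.sumCompl pA) (Equiv.sumCompl pA) = fromBlocks SAA 0 SBA 1 := by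
    ext x y
    cases x with
    | inl a =>
      cases y with
      | inl i =>
        simp only [Matrix.submatrix_apply, Equiv.sumCompl_apply_inl,
          Matrix.fromBlocks_apply₁₁]
        have hc : cc i.1 = Sum.inl (ci i) := hci i
        have h1 : M a.1 i.1 = -(1/2) * ∑ j, v₀ (r a.1, j) * v₀ (ci i, j) := by
          simp only [hM_def, Matrix.of_apply, hc, Sum.elim_inl]
        rw [h1, hsum]
        have hz : (∑ k : {i // ¬ pA i},
            (if r a.1 = r k.1 then (1:ℝ) else 0) * (if ci i = r k.1 then 1 else 0)) = 0 := by
          refine Finset.sum_eq_zero fun k _ => ?_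
          have hne : ¬ (r a.1 = r k.1) := by
            intro h
            exact k.2 ((hr h) ▸ a.2)
          rw [if_neg hne, zero_mul]
        rw [hz, zero_add]
        rfl
      | inr b =>
        simp only [Matrix.submatrix_apply, Equiv.sumCompl_apply_inl,
          Equiv.sumCompl_apply_inr, Matrix.fromBlocks_apply₁₂]
        have hc : cc b.1 = Sum.inr (jj b) := hjj b
        have h1 : M a.1 b.1 = v₀ (r a.1, jj b) := by
          simp only [hM_def, Matrix.of_apply, hc, Sum.elim_inr]
        rw [h1, v₀jj]
        have hne : ¬ (r a.1 = r b.1) := by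
          intro h; exact b.2 ((hr h) ▸ a.2)
        rw [if_neg hne]
        rfl
    | inr b' =>
      cases y with
      | inl i =>
        simp only [Matrix.submatrix_apply, Equiv.sumCompl_apply_inl,
          Equiv.sumCompl_apply_inr, Matrix.fromBlocks_apply₂₁]
        rfl
      | inr b =>
        simp only [Matrix.submatrix_apply, Equiv.sumCompl_apply_inr,
          Matrix.fromBlocks_apply₂₂]
        have hc : cc b.1 = Sum.inr (jj b) := hjj b
        have h1 : M b'.1 b.1 = v₀ (r b'.1, jj b) := by
          simp only [hM_def, Matrix.of_apply, hc, Sum.elim_inr]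
        rw [h1, v₀jj, Matrix.one_apply]
        by_cases h : b' = b
        · rw [if_pos (by rw [h]), if_pos h]
        · rw [if_neg (fun hh => h (Subtype.ext (hr hh))), if_neg h]
  set w : Fin (Fintype.card {i // pA i}) → ℝ := fun m => t (r (ℓ.symm m).1) with hw
  set w' : Fin (Fintype.card {i // pA i}) → ℝ := fun m => t (ci (ℓ.symm m)) with hw'
  set P : Matrix {i // pA i} {i // pA i} ℝ := (vandermonde w).submatrix ℓ ℓ with hP
  set Q : Matrix {i // pA i} {i // pA i} ℝ := (vandermonde w').submatrix ℓ ℓ with hQ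
  have hSAA : SAA = (-(1/2) : ℝ) • (P * Qᵀ) := by
    ext a i
    simp only [hSAA_def, Matrix.of_apply, Matrix.smul_apply, Matrix.mul_apply,
      Matrix.transpose_apply, hP, hQ, Matrix.submatrix_apply, Matrix.vandermonde_apply,
      hw, hw', Equiv.symm_apply_apply, smul_eq_mul, Finset.mul_sum]
  have hw_inj : Function.Injective w := by
    intro a b h
    exact ℓ.symm.injective (Subtype.val_injective (hr (ht_inj h)))
  have hw'_inj : Function.Injective w' := fun a b h =>
    ℓ.symm.injective (hci_inj (ht_inj h))
  have hP_det : P.det ≠ 0 := by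
    rw [hP, Matrix.det_submatrix_equiv_self]
    exact Matrix.det_vandermonde_ne_zero_iff.2 hw_inj
  have hQ_det : Q.det ≠ 0 := by
    rw [hQ, Matrix.det_submatrix_equiv_self]
    exact Matrix.det_vandermonde_ne_zero_iff.2 hw'_inj
  have hMdet : M.det = SAA.det := by
    rw [← Matrix.det_submatrix_equiv_self (Equiv.sumCompl pA) M, hsub,
      Matrix.det_fromBlocks_zero₁₂, Matrix.det_one, mul_one]
  rw [hMdet, hSAA, Matrix.det_smul, Matrix.det_mul, Matrix.det_transpose]
  exact mul_ne_zero (pow_ne_zero _ (by norm_num)) (mul_ne_zero hP_det hQ_det)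

/-- for the semi-random construction with indeterminate entries,
the determinant of every square submatrix of `G̃ = [-(1/2)ṼṼᵀ  Ṽ]` of size at most `f`
is a nonzero polynomial in the indeterminates, provided `2f ≤ p`. -/
theorem stmt11 (f p : ℕ) (hf : 0 < f) (h2f : 2 * f ≤ p)
    (Vt : Matrix (Fin f) (Fin (p - f)) (MvPolynomial (Fin f × Fin (p - f)) ℝ))
    (hV : Vt = Matrix.of fun i j => X (i, j))
    (G1 : Matrix (Fin f) (Fin f) (MvPolynomial (Fin f × Fin (p - f)) ℝ))
    (hG1 : G1 = (C (-(1/2) : ℝ) : MvPolynomial (Fin f × Fin (p - f)) ℝ) • (Vt * Vtᵀ))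
    (Gt : Matrix (Fin f) (Fin f ⊕ Fin (p - f)) (MvPolynomial (Fin f × Fin (p - f)) ℝ))
    (hGt : Gt = fromCols G1 Vt) :
    ∀ (ns : ℕ), ns ≤ f →
      ∀ (r : Fin ns → Fin f) (cc : Fin ns → Fin f ⊕ Fin (p - f)),
        Function.Injective r → Function.Injective cc →
        (Gt.submatrix r cc).det ≠ 0 := by
  intro ns hns r cc hr hcc
  have hfn : f ≤ p - f := by omega
  obtain ⟨v₀, hdet⟩ := stmt11_aux f (p - f) hfn ns hns r cc hr hcc
  intro h
  apply hdet
  have hmap : ((eval v₀).mapMatrix (Gt.submatrix r cc) : Matrix (Fin ns) (Fin ns) ℝ) =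
      Matrix.of fun x y : Fin ns =>
        Sum.elim (fun c => -(1/2) * ∑ j, v₀ (r x, j) * v₀ (c, j))
          (fun j => v₀ (r x, j)) (cc y) := by
    ext x y
    simp only [RingHom.mapMatrix_apply, Matrix.map_apply, Matrix.submatrix_apply, hGt,
      Matrix.of_apply]
    cases hcy : cc y with
    | inl c =>
      rw [Matrix.fromCols_apply_inl, Sum.elim_inl]
      simp only [hG1, Matrix.smul_apply, Matrix.mul_apply, Matrix.transpose_apply, hV,
        Matrix.of_apply, smul_eq_mul, _root_.map_mul, map_sum, eval_C, eval_X]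
    | inr j =>
      rw [Matrix.fromCols_apply_inr, Sum.elim_inr]
      simp [hV]
  rw [← hmap, ← RingHom.map_det, h, map_zero]
end

section
/- Suppose an m × n matrix G over a field has the property that every square submatrix is invertible. Then for any set F of at most m column indices (the 'failed' columns) and any set C of |F| row indices (the 'surviving checksums'), the |F| × |F| submatrix Ĝ = (g_{i,t})_{i∈C, t∈F} is invertible, and for any assignment of data vectors A_t (t = 1,…,n) in a vector space and checksum vectors C_i = Σ_t g_{i,t}·A_t, the lost data satisfies, for each t ∈ F: A_t = Σ_{i∈C} (Ĝ⁻¹)_{t,i}·(C_i − Σ_{l∉F} g_{i,l}·A_l). -/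
open Matrix

/-- MDS recovery formula.  If every square submatrix of `G` is
invertible, then for failed columns `τ` and surviving checksum rows `ρ` the
submatrix `Ĝ = G.submatrix ρ τ` is invertible, and each lost data block is the
stated linear combination of surviving checksums and surviving data blocks. -/
theorem stmt15 (m n k : ℕ) (K W : Type*) [Field K] [AddCommGroup W] [Module K W]
    (G : Matrix (Fin m) (Fin n) K)
    (hG : ∀ (j : ℕ) (r : Fin j → Fin m) (c : Fin j → Fin n),
      Function.Injective r → Function.Injective c → IsUnit (G.submatrix r c))
    (hkm : k ≤ m)
    (ρ : Fin k → Fin m) (τ : Fin k → Fin n)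
    (hρ : Function.Injective ρ) (hτ : Function.Injective τ)
    (A : Fin n → W) (Cs : Fin m → W)
    (hCs : ∀ i, Cs i = ∑ j, G i j • A j) :
    IsUnit (G.submatrix ρ τ) ∧
    ∀ t : Fin k, A (τ t) = ∑ i : Fin k, ((G.submatrix ρ τ)⁻¹ t i) •
      (Cs (ρ i) - ∑ l ∈ Finset.univ.filter (fun l => ∀ s, τ s ≠ l),
        G (ρ i) l • A l) := by
  have hunit := hG k ρ τ hρ hτ
  refine ⟨hunit, fun t => ?_⟩
  have key : ∀ i : Fin k,
      Cs (ρ i) - ∑ l ∈ Finset.univ.filter (fun l => ∀ s, τ s ≠ l), G (ρ i) l • A l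
        = ∑ s : Fin k, G (ρ i) (τ s) • A (τ s) := by
    intro i
    rw [hCs, sub_eq_iff_eq_add, ← Finset.sum_filter_add_sum_filter_not Finset.univ
      (fun l => ∀ s, τ s ≠ l) (fun j => G (ρ i) j • A j), add_comm]
    congr 1
    rw [show (Finset.univ.filter (fun l => ¬ ∀ s, τ s ≠ l))
        = Finset.univ.image τ by
      ext l
      simp [Function.Injective.eq_iff hτ, eq_comm]]
    rw [Finset.sum_image (fun a _ b _ h => hτ h)]
  simp only [key]
  have hmul : (G.submatrix ρ τ)⁻¹ * (G.submatrix ρ τ) = 1 :=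
    nonsing_inv_mul _ (isUnit_iff_isUnit_det _ |>.mp hunit)
  calc A (τ t) = ∑ s : Fin k, ((1 : Matrix (Fin k) (Fin k) K) t s) • A (τ s) := by
        simp [Matrix.one_apply]
    _ = ∑ s : Fin k, (∑ i : Fin k, (G.submatrix ρ τ)⁻¹ t i * (G.submatrix ρ τ) i s) • A (τ s) := by
        rw [← hmul]; rfl
    _ = ∑ i : Fin k, ((G.submatrix ρ τ)⁻¹ t i) • ∑ s : Fin k, G (ρ i) (τ s) • A (τ s) := by
        simp only [Finset.sum_smul, Finset.smul_sum, mul_smul]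
        rw [Finset.sum_comm]
        simp [Matrix.submatrix_apply]
end
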